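/- For every integer n ≥ 1 with n ∉ {1, 2, 3, 4, 7, 8, 9, 14}, the hop domination number of the path on n vertices satisfies γ_h(P_n) ≤ 2n/5 (i.e., 5·γ_h(P_n) ≤ 2n). -/

import Mathlib

/-!
Distances inside a segment of a path are the same as in the whole path, so hop dominating sets of
`P_m` and `P_k` placed side by side hop dominate `P_(m+k)`: `γ_h(P_(m+k)) ≤ γ_h(P_m) + γ_h(P_k)`.
Hence the bound `5 γ_h(P_n) ≤ 2n` is closed under addition of `n`. It holds for `n = 5, 6, 13`
(witnessed by `{1, 2}`, `{2, 3}` and `{2, 3, 8, 9, 12}`), and every `n` outside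
`{1, 2, 3, 4, 7, 8, 9, 14}` is `0` or a sum of these three numbers.
-/

/-- A set `S` of vertices is a hop dominating set of `G` if every vertex not in `S`
is at distance exactly 2 from some vertex of `S`. -/
def SimpleGraph.IsHopDominatingSet {V : Type*} (G : SimpleGraph V) (S : Finset V) : Prop :=
  ∀ v : V, v ∉ S → ∃ u ∈ S, G.dist u v = 2

/-- The hop domination number of `G`: the minimum cardinality of a hop dominating set. -/
noncomputable def SimpleGraph.hopDominationNumber {V : Type*} [Fintype V]
    (G : SimpleGraph V) : ℕ :=
  sInf {k : ℕ | ∃ S : Finset V, G.IsHopDominatingSet S ∧ S.card = k}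

namespace SimpleGraph

section HopDomination

variable {V : Type*} [Fintype V]

theorem IsHopDominatingSet.hopDominationNumber_le_card {G : SimpleGraph V} {S : Finset V}
    (h : G.IsHopDominatingSet S) : G.hopDominationNumber ≤ S.card :=
  Nat.sInf_le ⟨S, h, rfl⟩

theorem exists_isHopDominatingSet_card_eq_hopDominationNumber (G : SimpleGraph V) :
    ∃ S : Finset V, G.IsHopDominatingSet S ∧ S.card = G.hopDominationNumber :=
  Nat.sInf_mem (s := {k : ℕ | ∃ S : Finset V, G.IsHopDominatingSet S ∧ S.card = k})
    ⟨_, Finset.univ, fun v hv => absurd (Finset.mem_univ v) hv, rfl⟩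

end HopDomination

theorem pathGraph_dist_eq_two_iff {n : ℕ} {u v : Fin n} :
    (pathGraph n).dist u v = 2 ↔ u.val + 2 = v.val ∨ v.val + 2 = u.val := by
  rw [dist, ENat.toNat_eq_iff two_ne_zero, Nat.cast_ofNat, edist_eq_two_iff, pathGraph_adj,
    Ne, Fin.ext_iff]
  constructor
  · rintro ⟨hne, hnadj, w, hw⟩
    rw [mem_commonNeighbors, pathGraph_adj, pathGraph_adj] at hw
    omega
  · intro h
    have := u.isLt
    have := v.isLt
    refine ⟨by omega, by omega, ⟨min u.val v.val + 1, by omega⟩, ?_⟩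
    rw [mem_commonNeighbors, pathGraph_adj, pathGraph_adj]
    dsimp only
    omega

theorem pathGraph_isHopDominatingSet_iff {n : ℕ} {S : Finset (Fin n)} :
    (pathGraph n).IsHopDominatingSet S ↔
      ∀ v ∉ S, ∃ u ∈ S, u.val + 2 = v.val ∨ v.val + 2 = u.val := by
  simp only [IsHopDominatingSet, pathGraph_dist_eq_two_iff]

theorem hopDominationNumber_pathGraph_add_le (m k : ℕ) :
    (pathGraph (m + k)).hopDominationNumber ≤
      (pathGraph m).hopDominationNumber + (pathGraph k).hopDominationNumber := by
  obtain ⟨S, hS, hS_card⟩ := exists_isHopDominatingSet_card_eq_hopDominationNumber (pathGraph m)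
  obtain ⟨T, hT, hT_card⟩ := exists_isHopDominatingSet_card_eq_hopDominationNumber (pathGraph k)
  rw [pathGraph_isHopDominatingSet_iff] at hS hT
  have hU : (pathGraph (m + k)).IsHopDominatingSet
      (S.map (Fin.castAddEmb k) ∪ T.map (Fin.natAddEmb m)) := by
    rw [pathGraph_isHopDominatingSet_iff]
    intro v hv
    induction v using Fin.addCases with
    | left i =>
      have hi : i ∉ S := fun hi => hv (Finset.mem_union_left _ (Finset.mem_map_of_mem _ hi))
      obtain ⟨u, hu, hdist⟩ := hS i hi
      exact ⟨Fin.castAdd k u, Finset.mem_union_left _ (Finset.mem_map_of_mem _ hu), by simpa⟩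
    | right j =>
      have hj : j ∉ T := fun hj => hv (Finset.mem_union_right _ (Finset.mem_map_of_mem _ hj))
      obtain ⟨u, hu, hdist⟩ := hT j hj
      refine ⟨Fin.natAdd m u, Finset.mem_union_right _ (Finset.mem_map_of_mem _ hu), ?_⟩
      simp only [Fin.val_natAdd]
      omega
  calc (pathGraph (m + k)).hopDominationNumber
      ≤ (S.map (Fin.castAddEmb k) ∪ T.map (Fin.natAddEmb m)).card :=
        hU.hopDominationNumber_le_card
    _ ≤ S.card + T.card :=
        (Finset.card_union_le _ _).trans_eq (by rw [Finset.card_map, Finset.card_map])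
    _ = _ := by rw [hS_card, hT_card]

theorem five_mul_hopDominationNumber_pathGraph_add_le {m k : ℕ}
    (hm : 5 * (pathGraph m).hopDominationNumber ≤ 2 * m)
    (hk : 5 * (pathGraph k).hopDominationNumber ≤ 2 * k) :
    5 * (pathGraph (m + k)).hopDominationNumber ≤ 2 * (m + k) := by
  have := hopDominationNumber_pathGraph_add_le m k
  omega

theorem hopDominationNumber_pathGraph_zero : (pathGraph 0).hopDominationNumber = 0 :=
  Nat.le_zero.1 (IsHopDominatingSet.hopDominationNumber_le_card (S := ∅) fun v _ => v.elim0)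

theorem hopDominationNumber_pathGraph_five_le : (pathGraph 5).hopDominationNumber ≤ 2 :=
  IsHopDominatingSet.hopDominationNumber_le_card (S := {1, 2})
    (pathGraph_isHopDominatingSet_iff.2 (by decide))

theorem hopDominationNumber_pathGraph_six_le : (pathGraph 6).hopDominationNumber ≤ 2 :=
  IsHopDominatingSet.hopDominationNumber_le_card (S := {2, 3})
    (pathGraph_isHopDominatingSet_iff.2 (by decide))

theorem hopDominationNumber_pathGraph_thirteen_le : (pathGraph 13).hopDominationNumber ≤ 5 :=
  IsHopDominatingSet.hopDominationNumber_le_card (S := {2, 3, 8, 9, 12})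
    (pathGraph_isHopDominatingSet_iff.2 (by decide))

end SimpleGraph

theorem hop_domination_path_upper_general (n : ℕ)
    (hex : n ∉ ({1, 2, 3, 4, 7, 8, 9, 14} : Finset ℕ)) :
    5 * (SimpleGraph.pathGraph n).hopDominationNumber ≤ 2 * n := by
  induction n using Nat.strong_induction_on with
  | _ n ih =>
  simp only [Finset.mem_insert, Finset.mem_singleton] at hex ih
  have h5 := SimpleGraph.hopDominationNumber_pathGraph_five_le
  have h6 := SimpleGraph.hopDominationNumber_pathGraph_six_le
  have h13 := SimpleGraph.hopDominationNumber_pathGraph_thirteen_le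
  by_cases hn5 : 10 ≤ n ∧ n ≠ 12 ∧ n ≠ 13 ∧ n ≠ 19
  · obtain ⟨m, rfl⟩ : ∃ m, n = m + 5 := ⟨n - 5, by omega⟩
    exact SimpleGraph.five_mul_hopDominationNumber_pathGraph_add_le
      (ih m (by omega) (by omega)) (by omega)
  by_cases hn6 : n = 12 ∨ n = 19
  · obtain ⟨m, rfl⟩ : ∃ m, n = m + 6 := ⟨n - 6, by omega⟩
    exact SimpleGraph.five_mul_hopDominationNumber_pathGraph_add_le
      (ih m (by omega) (by omega)) (by omega)
  obtain rfl | rfl | rfl | rfl : n = 0 ∨ n = 5 ∨ n = 6 ∨ n = 13 := by omega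
  · rw [SimpleGraph.hopDominationNumber_pathGraph_zero]
  all_goals omega

theorem hop_domination_path_upper (n : ℕ) (hn : 1 ≤ n)
    (hex : n ∉ ({1, 2, 3, 4, 7, 8, 9, 14} : Finset ℕ)) :
    5 * (SimpleGraph.pathGraph n).hopDominationNumber ≤ 2 * n :=
  hop_domination_path_upper_general n hex
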